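/- arXiv:math-ph/0604039 — 2 statements merged into one kernel-verified Lean document; each statement's English description precedes it below -/
import Mathlib

section
/- Let Λ ∈ (0, 1/2]. There exists a positive constant c*_Λ ≪ 1 such that for every a ∈ [2+Λ, 4−Λ] with |a − 3| ≥ Λ and every p ∈ [−π,π]³ with e(p) = a and K(p) = 0 (note that s₁²+s₂²+s₃² > 0 at such p, so K is defined and smooth near p), one has |∇e(p) × ∇K(p)| ≥ c*_Λ, where × is the cross product in ℝ³ and ∇K is the gradient of the function K. -/
open Real

noncomputable section

abbrev E3 := EuclideanSpace ℝ (Fin 3)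

def toE3 (v : Fin 3 → ℝ) : E3 := (EuclideanSpace.equiv (Fin 3) ℝ).symm v

/-- Cross product of two vectors in `ℝ³`. -/
def cross3 (a b : E3) : E3 :=
  toE3 ![a 1 * b 2 - a 2 * b 1, a 2 * b 0 - a 0 * b 2, a 0 * b 1 - a 1 * b 0]

/-- The dispersion relation `e(p) = ∑ (1 - cos pⱼ)`. -/
def e3 (p : E3) : ℝ := ∑ i, (1 - Real.cos (p i))

/-- `∇e(p) = (s₁, s₂, s₃)`. -/
def gradE (p : E3) : E3 := toE3 fun i => Real.sin (p i)

/-- `ssum p = s₁² + s₂² + s₃²`. -/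
def ssum (p : E3) : ℝ := ∑ i, Real.sin (p i) ^ 2

/-- `M(p) = s₁²c₂c₃ + s₂²c₁c₃ + s₃²c₁c₂`. -/
def Mf (p : E3) : ℝ :=
  Real.sin (p 0) ^ 2 * Real.cos (p 1) * Real.cos (p 2) +
  Real.sin (p 1) ^ 2 * Real.cos (p 0) * Real.cos (p 2) +
  Real.sin (p 2) ^ 2 * Real.cos (p 0) * Real.cos (p 1)

/-- Gauss curvature function `K(p) = M(p)/(s₁²+s₂²+s₃²)²`. -/
def Kf (p : E3) : ℝ := Mf p / (ssum p) ^ 2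

/-!
At a point with `K(p) = 0` we have `M(p) = 0`, so the quotient rule gives `∇K = ∇M / |∇e|⁴` and
`∇e × ∇K = (∇e × ∇M) / |∇e|⁴`. The components of `∇e × ∇M` factor as
`s_j s_k (c_k − c_j) (1 − c_i σ)` with `σ = c₁ + c₂ + c₃ = 3 − e`. For `|σ| < 1` the last factor
never vanishes; if the others all vanish, each pair of cosines is equal or one of them is `±1`, and
in each of these configurations `M = 0` forces `σ = 0` or `|σ| ≥ 1`. Hence `‖∇e × ∇M‖` is positive
on the compact set of points of the cube with `M = 0` and `Λ ≤ |σ| ≤ 1 − Λ`, so it has a positive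
minimum there, and `|∇e|² ≤ 3` turns it into the constant.
-/

section Gradient

open InnerProductSpace

theorem hasGradientAt_of_hasFDerivAt_single {ι : Type*} [Fintype ι] [DecidableEq ι]
    {f : EuclideanSpace ℝ ι → ℝ} {L : EuclideanSpace ℝ ι →L[ℝ] ℝ} {p : EuclideanSpace ℝ ι}
    (h : HasFDerivAt f L p) :
    HasGradientAt f (WithLp.toLp 2 fun i => L (EuclideanSpace.single i 1)) p := by
  suffices hL : (toDual ℝ _).symm L = WithLp.toLp 2 fun i => L (EuclideanSpace.single i 1) by
    rwa [hasGradientAt_iff_hasFDerivAt, ← hL, LinearIsometryEquiv.apply_symm_apply]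
  ext i
  change _ = L (EuclideanSpace.single i 1)
  rw [← toDual_symm_apply, real_inner_comm, EuclideanSpace.inner_single_left, map_one, one_mul]

theorem HasGradientAt.div_of_eq_zero {F : Type*} [NormedAddCommGroup F] [InnerProductSpace ℝ F]
    [CompleteSpace F] {f g : F → ℝ} {f' : F} {x : F} (hf : HasGradientAt f f' x)
    (hg : DifferentiableAt ℝ g x) (hfx : f x = 0) (hgx : g x ≠ 0) :
    HasGradientAt (fun y => f y / g y) ((g x)⁻¹ • f') x := by
  rw [hasGradientAt_iff_hasFDerivAt] at hf ⊢
  have h := hf.fun_mul ((hasDerivAt_inv hgx).comp_hasFDerivAt x hg.hasFDerivAt)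
  simp only [hfx, zero_smul, zero_add, Function.comp_def] at h
  simpa only [map_smul, div_eq_mul_inv] using h

end Gradient

theorem isCompact_setOf_forall_abs_le {ι : Type*} [Fintype ι] (r : ℝ) :
    IsCompact {p : EuclideanSpace ℝ ι | ∀ i, |p i| ≤ r} := by
  convert (EuclideanSpace.equiv ι ℝ).toHomeomorph.isCompact_preimage.2
    (isCompact_univ_pi fun _ => isCompact_Icc (a := -r) (b := r)) using 1
  ext p
  simp [abs_le, Pi.le_def, forall_and]

section Cosines

variable {x y z : ℝ}

/-- `M(p)` written in the cosines `x = c₁`, `y = c₂`, `z = c₃`. -/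
def curvNum (x y z : ℝ) : ℝ := (1 - x ^ 2) * y * z + (1 - y ^ 2) * x * z + (1 - z ^ 2) * x * y

theorem curvNum_swap_left : curvNum x y z = curvNum y x z := by unfold curvNum; ring

theorem curvNum_swap_right : curvNum x y z = curvNum x z y := by unfold curvNum; ring

theorem one_le_abs_add_add_of_sq_eq_one (hx : x ^ 2 = 1) (hy : y ^ 2 = 1) (hz : z ^ 2 = 1) :
    1 ≤ |x + y + z| := by
  rcases sq_eq_one_iff.1 hx with rfl | rfl <;> rcases sq_eq_one_iff.1 hy with rfl | rfl <;>
    rcases sq_eq_one_iff.1 hz with rfl | rfl <;> norm_num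

theorem curvNum_ne_zero_of_two (hx : x ^ 2 = 1) (hy : y ^ 2 = 1) (hz : z ^ 2 < 1) :
    curvNum x y z ≠ 0 := by
  have hxy : (x * y) ^ 2 = 1 := by rw [mul_pow, hx, hy, one_mul]
  have h : curvNum x y z = (1 - z ^ 2) * (x * y) := by
    unfold curvNum; linear_combination -(y * z) * hx - (x * z) * hy
  rw [h]
  exact mul_ne_zero (by linarith) fun h0 => by simp [h0] at hxy

theorem curvNum_ne_zero_of_one (hx : x ^ 2 = 1) (hy : y ^ 2 < 1) (hσ : |x + y + y| < 1) :
    curvNum x y y ≠ 0 := by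
  have h : curvNum x y y = 2 * (1 - y ^ 2) * x * y := by
    unfold curvNum; linear_combination -(y * y) * hx
  rw [h]
  refine mul_ne_zero (mul_ne_zero (by nlinarith) fun hx0 => by simp [hx0] at hx) fun hy0 => ?_
  rw [hy0, add_zero, add_zero, ← sq_lt_one_iff_abs_lt_one, hx] at hσ
  exact lt_irrefl _ hσ

theorem curvNum_ne_zero_of_none (hx : x ^ 2 < 1) (hσ : x + x + x ≠ 0) : curvNum x x x ≠ 0 := by
  have h : curvNum x x x = 3 * (1 - x ^ 2) * x ^ 2 := by unfold curvNum; ring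
  rw [h]
  exact mul_ne_zero (by nlinarith) (pow_ne_zero 2 fun hx0 => hσ (by simp [hx0]))

theorem curvNum_ne_zero (hx : x ^ 2 ≤ 1) (hy : y ^ 2 ≤ 1) (hz : z ^ 2 ≤ 1)
    (hσ₀ : x + y + z ≠ 0) (hσ₁ : |x + y + z| < 1)
    (hyz : y ^ 2 = 1 ∨ z ^ 2 = 1 ∨ y = z) (hzx : z ^ 2 = 1 ∨ x ^ 2 = 1 ∨ z = x)
    (hxy : x ^ 2 = 1 ∨ y ^ 2 = 1 ∨ x = y) : curvNum x y z ≠ 0 := by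
  by_cases hx1 : x ^ 2 = 1 <;> by_cases hy1 : y ^ 2 = 1 <;> by_cases hz1 : z ^ 2 = 1
  · exact absurd (one_le_abs_add_add_of_sq_eq_one hx1 hy1 hz1) hσ₁.not_ge
  · exact curvNum_ne_zero_of_two hx1 hy1 (hz.lt_of_ne hz1)
  · rw [curvNum_swap_right]
    exact curvNum_ne_zero_of_two hx1 hz1 (hy.lt_of_ne hy1)
  · obtain rfl : y = z := (hyz.resolve_left hy1).resolve_left hz1
    exact curvNum_ne_zero_of_one hx1 (hy.lt_of_ne hy1) hσ₁
  · rw [curvNum_swap_left, curvNum_swap_right]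
    exact curvNum_ne_zero_of_two hy1 hz1 (hx.lt_of_ne hx1)
  · obtain rfl : z = x := (hzx.resolve_left hz1).resolve_left hx1
    rw [curvNum_swap_left]
    exact curvNum_ne_zero_of_one hy1 (hx.lt_of_ne hx1) (by convert hσ₁ using 2; ring)
  · obtain rfl : x = y := (hxy.resolve_left hx1).resolve_left hy1
    rw [curvNum_swap_right, curvNum_swap_left]
    exact curvNum_ne_zero_of_one hz1 (hx.lt_of_ne hx1) (by convert hσ₁ using 2; ring)
  · obtain rfl : x = y := (hxy.resolve_left hx1).resolve_left hy1
    obtain rfl : z = x := (hzx.resolve_left hz1).resolve_left hx1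
    exact curvNum_ne_zero_of_none (hx.lt_of_ne hx1) hσ₀

theorem cos_sq_eq_one_or_of_sin_mul_sin_mul_eq_zero {a b : ℝ}
    (h : sin a * sin b * (cos b - cos a) = 0) : cos a ^ 2 = 1 ∨ cos b ^ 2 = 1 ∨ cos a = cos b := by
  rcases mul_eq_zero.1 h with h | h
  · rcases mul_eq_zero.1 h with h | h
    · left; nlinarith [sin_sq_add_cos_sq a]
    · right; left; nlinarith [sin_sq_add_cos_sq b]
  · right; right; linarith

theorem one_sub_cos_mul_ne_zero {σ : ℝ} (hσ : |σ| < 1) (t : ℝ) : 1 - cos t * σ ≠ 0 := by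
  have h : |cos t * σ| < 1 := by
    rw [abs_mul]
    exact lt_of_le_of_lt (mul_le_of_le_one_left (abs_nonneg σ) (abs_cos_le_one t)) hσ
  intro h0
  rw [← sub_eq_zero.1 h0, abs_one] at h
  exact lt_irrefl _ h

end Cosines

section Surface

variable {p : E3}

def cosSum (p : E3) : ℝ := cos (p 0) + cos (p 1) + cos (p 2)

theorem e3_eq (p : E3) : e3 p = 3 - cosSum p := by
  simp only [e3, cosSum, Fin.sum_univ_three]; ring

theorem ssum_eq (p : E3) : ssum p = sin (p 0) ^ 2 + sin (p 1) ^ 2 + sin (p 2) ^ 2 := by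
  simp [ssum, Fin.sum_univ_three]

theorem ssum_le_three (p : E3) : ssum p ≤ 3 := by
  rw [ssum_eq]
  linarith [sin_sq_le_one (p 0), sin_sq_le_one (p 1), sin_sq_le_one (p 2)]

theorem ssum_pos_of_abs_cosSum_lt_one (hσ : |cosSum p| < 1) : 0 < ssum p := by
  by_contra! h
  rw [ssum_eq] at h
  obtain ⟨h0, h1, h2⟩ : sin (p 0) ^ 2 = 0 ∧ sin (p 1) ^ 2 = 0 ∧ sin (p 2) ^ 2 = 0 := by
    refine ⟨?_, ?_, ?_⟩ <;>
      linarith [sq_nonneg (sin (p 0)), sq_nonneg (sin (p 1)), sq_nonneg (sin (p 2))]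
  exact (one_le_abs_add_add_of_sq_eq_one (by rw [cos_sq', h0, sub_zero])
    (by rw [cos_sq', h1, sub_zero]) (by rw [cos_sq', h2, sub_zero])).not_gt hσ

theorem Mf_eq_curvNum (p : E3) : Mf p = curvNum (cos (p 0)) (cos (p 1)) (cos (p 2)) := by
  simp only [Mf, curvNum, sin_sq]

def gradM (p : E3) : E3 :=
  toE3 ![sin (p 0) * (2 * cos (p 0) * cos (p 1) * cos (p 2)
      - sin (p 1) ^ 2 * cos (p 2) - sin (p 2) ^ 2 * cos (p 1)),
    sin (p 1) * (2 * cos (p 0) * cos (p 1) * cos (p 2)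
      - sin (p 0) ^ 2 * cos (p 2) - sin (p 2) ^ 2 * cos (p 0)),
    sin (p 2) * (2 * cos (p 0) * cos (p 1) * cos (p 2)
      - sin (p 0) ^ 2 * cos (p 1) - sin (p 1) ^ 2 * cos (p 0))]

theorem hasGradientAt_Mf (p : E3) : HasGradientAt Mf (gradM p) p := by
  have hs (i : Fin 3) := (hasDerivAt_sin (p i)).comp_hasFDerivAt p
    (EuclideanSpace.proj i : E3 →L[ℝ] ℝ).hasFDerivAt
  have hc (i : Fin 3) := (hasDerivAt_cos (p i)).comp_hasFDerivAt p
    (EuclideanSpace.proj i : E3 →L[ℝ] ℝ).hasFDerivAt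
  have h := (((((hs 0).pow 2).mul (hc 1)).mul (hc 2)).add
    ((((hs 1).pow 2).mul (hc 0)).mul (hc 2))).add ((((hs 2).pow 2).mul (hc 0)).mul (hc 1))
  convert hasGradientAt_of_hasFDerivAt_single h using 1
  · funext q
    simp only [Mf, Pi.add_apply, Pi.mul_apply, Function.comp_apply, PiLp.proj_apply]
  · ext i
    fin_cases i <;> simp [gradM, toE3] <;> ring

/-- On the zero set of `M` the quotient rule loses its second term. -/
theorem gradient_Kf (hS : ssum p ≠ 0) (hM : Mf p = 0) :
    gradient Kf p = (ssum p ^ 2)⁻¹ • gradM p :=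
  ((hasGradientAt_Mf p).div_of_eq_zero (by unfold ssum; fun_prop) hM (pow_ne_zero 2 hS)).gradient

theorem cross3_smul_right (a b : E3) (r : ℝ) : cross3 a (r • b) = r • cross3 a b := by
  ext i
  fin_cases i <;> simp [cross3, toE3] <;> ring

theorem cross3_gradE_gradM (p : E3) : cross3 (gradE p) (gradM p) = toE3
    ![sin (p 1) * sin (p 2) * (cos (p 2) - cos (p 1)) * (1 - cos (p 0) * cosSum p),
      sin (p 2) * sin (p 0) * (cos (p 0) - cos (p 2)) * (1 - cos (p 1) * cosSum p),
      sin (p 0) * sin (p 1) * (cos (p 1) - cos (p 0)) * (1 - cos (p 2) * cosSum p)] := by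
  ext i
  fin_cases i <;> simp [cross3, gradE, gradM, cosSum, toE3] <;> simp only [sin_sq] <;> ring

theorem continuous_cross3_gradE_gradM : Continuous fun p => cross3 (gradE p) (gradM p) := by
  unfold cross3 gradE gradM toE3
  fun_prop

theorem cross3_gradE_gradM_ne_zero (hM : Mf p = 0) (hσ₀ : cosSum p ≠ 0) (hσ₁ : |cosSum p| < 1) :
    cross3 (gradE p) (gradM p) ≠ 0 := by
  intro h
  have hcomp (i : Fin 3) := congrArg (· i) ((cross3_gradE_gradM p).symm.trans h)
  have hpair (i j k : Fin 3)
      (h : sin (p j) * sin (p k) * (cos (p k) - cos (p j)) * (1 - cos (p i) * cosSum p) = 0) :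
      cos (p j) ^ 2 = 1 ∨ cos (p k) ^ 2 = 1 ∨ cos (p j) = cos (p k) :=
    cos_sq_eq_one_or_of_sin_mul_sin_mul_eq_zero
      ((mul_eq_zero.1 h).resolve_right (one_sub_cos_mul_ne_zero hσ₁ _))
  refine curvNum_ne_zero (cos_sq_le_one _) (cos_sq_le_one _) (cos_sq_le_one _) hσ₀ hσ₁
    (hpair 0 1 2 (hcomp 0)) (hpair 1 2 0 (hcomp 1)) (hpair 2 0 1 (hcomp 2)) ?_
  rwa [← Mf_eq_curvNum]

theorem norm_cross3_gradE_gradient_Kf (hS : 0 < ssum p) (hM : Mf p = 0) :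
    ‖cross3 (gradE p) (gradient Kf p)‖ = ‖cross3 (gradE p) (gradM p)‖ / ssum p ^ 2 := by
  rw [gradient_Kf hS.ne' hM, cross3_smul_right, norm_smul, norm_inv, norm_pow,
    Real.norm_of_nonneg hS.le, inv_mul_eq_div]

theorem isCompact_parabolicPoints (Λ : ℝ) :
    IsCompact {p : E3 | (∀ i, |p i| ≤ π) ∧ Λ ≤ |cosSum p| ∧ |cosSum p| ≤ 1 - Λ ∧ Mf p = 0} := by
  refine (isCompact_setOf_forall_abs_le π).inter_right ?_
  have hσ : Continuous fun p => |cosSum p| := by unfold cosSum; fun_prop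
  have hM : Continuous Mf := by unfold Mf; fun_prop
  exact (isClosed_le continuous_const hσ).inter
    ((isClosed_le hσ continuous_const).inter (isClosed_eq hM continuous_const))

end Surface

theorem stmt10_general (Λ : ℝ) (hΛ0 : 0 < Λ) :
    ∃ c : ℝ, 0 < c ∧ ∀ a ∈ Set.Icc (2 + Λ) (4 - Λ), Λ ≤ |a - 3| →
      ∀ p : E3, (∀ i, |p i| ≤ π) → e3 p = a → Kf p = 0 →
        0 < ssum p ∧ c ≤ ‖cross3 (gradE p) (gradient Kf p)‖ := by
  obtain ⟨c, hc, hmin⟩ := (isCompact_parabolicPoints Λ).exists_forall_le'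
    continuous_cross3_gradE_gradM.norm.continuousOn fun p ⟨_, hσ₀, hσ₁, hM⟩ =>
      norm_pos_iff.2 (cross3_gradE_gradM_ne_zero hM (abs_pos.1 (hΛ0.trans_le hσ₀)) (by linarith))
  refine ⟨c / 9, by positivity, fun a ha haΛ p hcube he hK => ?_⟩
  have hσ : |cosSum p| = |a - 3| := by rw [← he, e3_eq, ← abs_neg]; ring_nf
  have hσ₁ : |cosSum p| ≤ 1 - Λ := by
    rw [hσ, abs_le]; constructor <;> linarith [ha.1, ha.2]
  have hS : 0 < ssum p := ssum_pos_of_abs_cosSum_lt_one (by linarith)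
  have hM : Mf p = 0 := by simpa [Kf, hS.ne'] using hK
  refine ⟨hS, ?_⟩
  rw [norm_cross3_gradE_gradient_Kf hS hM]
  have h9 : ssum p ^ 2 ≤ 9 := by nlinarith [ssum_le_three p]
  calc c / 9 ≤ c / ssum p ^ 2 := by gcongr
    _ ≤ _ := by gcongr; exact hmin p ⟨hcube, hσ ▸ haΛ, hσ₁, hM⟩

/-- For `a ∈ [2+Λ, 4−Λ]` with `|a−3| ≥ Λ` and `p ∈ [−π,π]³` with `e(p) = a`, `K(p) = 0`,
one has `|∇e(p) × ∇K(p)| ≥ c*_Λ > 0`. -/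
theorem stmt10 (Λ : ℝ) (hΛ0 : 0 < Λ) (hΛ : Λ ≤ 1/2) :
    ∃ c : ℝ, 0 < c ∧ ∀ a ∈ Set.Icc (2 + Λ) (4 - Λ), Λ ≤ |a - 3| →
      ∀ p : E3, (∀ i, |p i| ≤ π) → e3 p = a → Kf p = 0 →
        0 < ssum p ∧ c ≤ ‖cross3 (gradE p) (gradient Kf p)‖ :=
  stmt10_general Λ hΛ0
end
end

section
/- There exists a universal constant C such that sup_{a ∈ ℝ} ∫_{Σ_a} |∇e(p)|^{−1} dm_a(p) ≤ C, where Σ_a = {p ∈ [−π,π]³ : e(p) = a} and dm_a is the surface area measure on Σ_a (the 2-dimensional Hausdorff measure restricted to Σ_a). In particular, this integral is finite even for the critical values a ∈ {0, 2, 4, 6} of e, where |∇e| vanishes at the (finitely many) critical points lying on Σ_a. -/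
open MeasureTheory Real
open scoped ENNReal

noncomputable section

/-- The level set `Σ_a = {p ∈ [−π,π]³ : e(p) = a}`. -/
def SigmaA (a : ℝ) : Set E3 := {p | (∀ i, |p i| ≤ π) ∧ e3 p = a}

/-!
If `|∇e(p)| ≤ δ`, every coordinate of `p` lies within `πδ/2` of `{0, ±π}`. Reflecting each
coordinate into `[0, πδ/2]` turns `Σ_a` into level sets of `∑ ±cos qᵢ` inside a cube of side
`πδ/2`. Since `|cos x - cos y|` is comparable to `(x + y) |x - y|` there, the projection
forgetting the largest coordinate is injective with Lipschitz inverse on such a level set, so its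
area is `O(δ²)` uniformly in `a`. Summing over the dyadic shells `δ = 2⁻ᵐ` bounds
`∫ |∇e|⁻¹ dm_a` by a convergent geometric series.
-/

open Set
open scoped NNReal

theorem abs_cos_sub_cos_le_mul (x y : ℝ) : |cos x - cos y| ≤ |x + y| / 2 * |x - y| := by
  rw [cos_sub_cos, abs_mul, abs_mul, abs_neg, abs_two]
  calc 2 * |sin ((x + y) / 2)| * |sin ((x - y) / 2)| ≤ 2 * |(x + y) / 2| * |(x - y) / 2| := by
        gcongr 2 * ?_ * ?_ <;> exact abs_sin_le_abs
    _ = |x + y| / 2 * |x - y| := by rw [abs_div, abs_div, abs_two]; ring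

theorem mul_le_abs_cos_sub_cos {x y : ℝ} (hs : |x + y| ≤ π) (hd : |x - y| ≤ π) :
    2 / π ^ 2 * (|x + y| * |x - y|) ≤ |cos x - cos y| := by
  rw [cos_sub_cos, abs_mul, abs_mul]
  have h₁ := mul_abs_le_abs_sin (x := (x + y) / 2) (by rw [abs_div, abs_two]; linarith)
  have h₂ := mul_abs_le_abs_sin (x := (x - y) / 2) (by rw [abs_div, abs_two]; linarith)
  rw [abs_div, abs_two] at h₁ h₂
  have hπ := pi_pos
  calc 2 / π ^ 2 * (|x + y| * |x - y|)
        = 2 * (2 / π * (|x + y| / 2)) * (2 / π * (|x - y| / 2)) := by field_simp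
    _ ≤ |-2| * |sin ((x + y) / 2)| * |sin ((x - y) / 2)| := by
        rw [abs_neg, abs_two]
        gcongr

theorem hausdorffMeasure_le_of_antilipschitzWith_domRestrict {X Y : Type*} [EMetricSpace X]
    [MeasurableSpace X] [BorelSpace X] [EMetricSpace Y] [MeasurableSpace Y] [BorelSpace Y]
    {f : X → Y} {s : Set X} {K : ℝ≥0} (hf : AntilipschitzWith K (s.domRestrict f)) {d : ℝ}
    (hd : 0 ≤ d) : μH[d] s ≤ (K : ℝ≥0∞) ^ d * μH[d] (f '' s) := by
  have h := hf.le_hausdorffMeasure_image hd univ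
  rwa [image_univ, range_domRestrict, ← isometry_subtype_coe.hausdorffMeasure_image (Or.inl hd),
    image_univ, Subtype.range_coe] at h

theorem EuclideanSpace.dist_le_sum_abs_sub {ι : Type*} [Fintype ι] (p q : EuclideanSpace ℝ ι) :
    dist p q ≤ ∑ i, |p i - q i| := by
  rw [EuclideanSpace.dist_eq, sqrt_le_left (Finset.sum_nonneg fun i _ => abs_nonneg _)]
  simp only [Real.dist_eq]
  exact Finset.sum_sq_le_sq_sum_of_nonneg fun i _ => abs_nonneg _

theorem ofReal_inv_le_one_add_two_mul_tsum (t : ℝ) :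
    ENNReal.ofReal t⁻¹ ≤
      1 + 2 * ∑' m : ℕ, (Iic ((2 : ℝ)⁻¹ ^ m)).indicator (fun _ => 2 ^ m) t := by
  rcases lt_or_ge t⁻¹ 1 with h | h
  · exact (ENNReal.ofReal_le_one.2 h.le).trans le_self_add
  obtain ⟨M, hM, hM'⟩ := exists_nat_pow_near h one_lt_two
  have ht : 0 < t := inv_pos.1 (zero_lt_one.trans_le h)
  have hmem : t ∈ Iic ((2 : ℝ)⁻¹ ^ M) := by
    rw [mem_Iic, inv_pow, le_inv_comm₀ ht (by positivity)]
    exact hM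
  calc ENNReal.ofReal t⁻¹ ≤ ENNReal.ofReal (2 ^ (M + 1)) := ENNReal.ofReal_le_ofReal hM'.le
    _ = 2 * (Iic ((2 : ℝ)⁻¹ ^ M)).indicator (fun _ => 2 ^ M) t := by
        rw [indicator_of_mem hmem, ENNReal.ofReal_pow zero_le_two, pow_succ']
        simp
    _ ≤ 2 * ∑' m : ℕ, (Iic ((2 : ℝ)⁻¹ ^ m)).indicator (fun _ => 2 ^ m) t := by
        gcongr
        exact ENNReal.le_tsum M
    _ ≤ _ := le_add_self

theorem lintegral_ofReal_inv_le {X : Type*} [MeasurableSpace X] {μ : Measure X} {g : X → ℝ}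
    (hg : Measurable g) {A : ℝ≥0∞} (huniv : μ univ ≤ A)
    (hlevel : ∀ s ≤ 1, μ {x | g x ≤ s} ≤ A * ENNReal.ofReal s ^ 2) :
    ∫⁻ x, ENNReal.ofReal (g x)⁻¹ ∂μ ≤ 5 * A := by
  set L : ℕ → Set X := fun m => g ⁻¹' Iic ((2 : ℝ)⁻¹ ^ m)
  have hL : ∀ m, MeasurableSet (L m) := fun m => hg measurableSet_Iic
  have hterm : ∀ m : ℕ, 2 ^ m * μ (L m) ≤ A * 2⁻¹ ^ m := fun m => by
    have h2 : ENNReal.ofReal ((2 : ℝ)⁻¹ ^ m) = 2⁻¹ ^ m := by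
      rw [ENNReal.ofReal_pow (by norm_num), ENNReal.ofReal_inv_of_pos two_pos,
        ENNReal.ofReal_ofNat]
    calc 2 ^ m * μ (L m) ≤ 2 ^ m * (A * (2⁻¹ ^ m) ^ 2) := by
          rw [← h2]
          gcongr
          exact hlevel _ (pow_le_one₀ (by norm_num) (by norm_num))
      _ = A * 2⁻¹ ^ m * (2 * 2⁻¹) ^ m := by ring
      _ = A * 2⁻¹ ^ m := by
        rw [ENNReal.mul_inv_cancel two_ne_zero ENNReal.ofNat_ne_top, one_pow, mul_one]
  calc ∫⁻ x, ENNReal.ofReal (g x)⁻¹ ∂μ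
      ≤ ∫⁻ x, 1 + 2 * ∑' m, (L m).indicator (fun _ => 2 ^ m) x ∂μ :=
        lintegral_mono fun x => by
          have h := ofReal_inv_le_one_add_two_mul_tsum (g x)
          simp only [indicator_apply] at h ⊢
          exact h
    _ = μ univ + 2 * ∑' m, 2 ^ m * μ (L m) := by
        rw [lintegral_add_left measurable_const, lintegral_one,
          lintegral_const_mul' 2 _ ENNReal.ofNat_ne_top,
          lintegral_tsum fun m => (measurable_const.indicator (hL m)).aemeasurable]
        simp only [lintegral_indicator_const (hL _)]
    _ ≤ A + 2 * ∑' m : ℕ, A * 2⁻¹ ^ m :=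
        add_le_add huniv (by gcongr 2 * ?_; exact ENNReal.tsum_le_tsum hterm)
    _ = 5 * A := by
        rw [ENNReal.tsum_mul_left, ENNReal.tsum_geometric, ENNReal.one_sub_inv_two, inv_inv]
        ring

section CosLevelBox

variable {n : ℕ}

theorem abs_sub_le_of_sum_mul_cos_eq {η q q' : Fin (n + 1) → ℝ} {j : Fin (n + 1)}
    (hη : ∀ i, |η i| = 1)
    (hq : ∀ i, q i ∈ Icc 0 (π / 2)) (hq' : ∀ i, q' i ∈ Icc 0 (π / 2))
    (hj : ∀ i, q i ≤ q j) (hj' : ∀ i, q' i ≤ q' j)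
    (he : ∑ i, η i * cos (q i) = ∑ i, η i * cos (q' i)) :
    |q j - q' j| ≤ π ^ 2 / 4 * ∑ k, |q (j.succAbove k) - q' (j.succAbove k)| := by
  have hπ := pi_pos
  set M := q j + q' j
  set S := ∑ k, |q (j.succAbove k) - q' (j.succAbove k)|
  have hbalance : η j * (cos (q j) - cos (q' j)) =
      -∑ k, η (j.succAbove k) * (cos (q (j.succAbove k)) - cos (q' (j.succAbove k))) := by
    have h := he
    rw [Fin.sum_univ_succAbove _ j, Fin.sum_univ_succAbove _ j] at h
    simp only [mul_sub, Finset.sum_sub_distrib]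
    linarith
  have hupper : |cos (q j) - cos (q' j)| ≤ M / 2 * S := by
    rw [← one_mul |_ - _|, ← hη j, ← abs_mul, hbalance, abs_neg, Finset.mul_sum]
    refine (Finset.abs_sum_le_sum_abs _ _).trans (Finset.sum_le_sum fun k _ => ?_)
    rw [abs_mul, hη, one_mul]
    refine (abs_cos_sub_cos_le_mul _ _).trans (mul_le_mul_of_nonneg_right ?_ (abs_nonneg _))
    rw [abs_of_nonneg (add_nonneg (hq _).1 (hq' _).1)]
    linarith [hj (j.succAbove k), hj' (j.succAbove k)]
  have hlower : 2 / π ^ 2 * (M * |q j - q' j|) ≤ |cos (q j) - cos (q' j)| := by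
    have hM : |q j + q' j| = M := abs_of_nonneg (add_nonneg (hq j).1 (hq' j).1)
    rw [← hM]
    refine mul_le_abs_cos_sub_cos ?_ ?_
    · rw [hM]; linarith [(hq j).2, (hq' j).2]
    · rw [abs_le]; constructor <;> linarith [(hq j).1, (hq' j).1, (hq j).2, (hq' j).2]
  rcases (add_nonneg (hq j).1 (hq' j).1).eq_or_lt with hM | hM
  · have h₁ : q j = 0 := by linarith [(hq j).1, (hq' j).1]
    have h₂ : q' j = 0 := by linarith [(hq j).1, (hq' j).1]
    rw [h₁, h₂, sub_zero, abs_zero]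
    positivity
  · refine le_of_mul_le_mul_left ?_ (by positivity : 0 < 2 / π ^ 2 * M)
    calc 2 / π ^ 2 * M * |q j - q' j| ≤ M / 2 * S := by linarith
      _ = 2 / π ^ 2 * M * (π ^ 2 / 4 * S) := by field_simp; ring

def cosLevelBox (η : Fin (n + 1) → ℝ) (b ℓ : ℝ) (j : Fin (n + 1)) :
    Set (EuclideanSpace ℝ (Fin (n + 1))) :=
  {q | (∀ i, q i ∈ Icc 0 ℓ) ∧ (∀ i, q i ≤ q j) ∧ ∑ i, η i * cos (q i) = b}

theorem dist_le_of_mem_cosLevelBox {η : Fin (n + 1) → ℝ} {b ℓ : ℝ} {j : Fin (n + 1)}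
    (hη : ∀ i, |η i| = 1) (hℓ : ℓ ≤ π / 2) {p p' : EuclideanSpace ℝ (Fin (n + 1))}
    (hp : p ∈ cosLevelBox η b ℓ j) (hp' : p' ∈ cosLevelBox η b ℓ j) :
    dist p p' ≤ 4 * n * dist (fun k => p (j.succAbove k)) (fun k => p' (j.succAbove k)) := by
  obtain ⟨hbox, hj, hsum⟩ := hp
  obtain ⟨hbox', hj', hsum'⟩ := hp'
  have hq : ∀ i, p i ∈ Icc 0 (π / 2) := fun i => ⟨(hbox i).1, (hbox i).2.trans hℓ⟩
  have hq' : ∀ i, p' i ∈ Icc 0 (π / 2) := fun i => ⟨(hbox' i).1, (hbox' i).2.trans hℓ⟩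
  have hpivot := abs_sub_le_of_sum_mul_cos_eq hη hq hq' hj hj' (hsum.trans hsum'.symm)
  set D := dist (fun k => p (j.succAbove k)) (fun k => p' (j.succAbove k))
  have hS : ∑ k, |p (j.succAbove k) - p' (j.succAbove k)| ≤ n * D := by
    calc ∑ k, |p (j.succAbove k) - p' (j.succAbove k)| ≤ ∑ _k : Fin n, D :=
          Finset.sum_le_sum fun k _ => by
            simpa only [Real.dist_eq] using dist_le_pi_dist
              (fun k => p (j.succAbove k)) (fun k => p' (j.succAbove k)) k
      _ = n * D := by simp
  have hπ : π ^ 2 / 4 + 1 ≤ 4 := by nlinarith [pi_lt_d2, pi_pos]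
  calc dist p p' ≤ ∑ i, |p i - p' i| := EuclideanSpace.dist_le_sum_abs_sub p p'
    _ = |p j - p' j| + ∑ k, |p (j.succAbove k) - p' (j.succAbove k)| :=
        Fin.sum_univ_succAbove _ j
    _ ≤ (π ^ 2 / 4 + 1) * ∑ k, |p (j.succAbove k) - p' (j.succAbove k)| := by linarith
    _ ≤ 4 * (n * D) := by gcongr
    _ = 4 * n * D := by ring

theorem hausdorffMeasure_cosLevelBox_le {η : Fin (n + 1) → ℝ} (hη : ∀ i, |η i| = 1)
    (b : ℝ) {ℓ : ℝ} (hℓ : ℓ ≤ π / 2) (j : Fin (n + 1)) :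
    μH[n] (cosLevelBox η b ℓ j) ≤ (4 * n) ^ n * ENNReal.ofReal ℓ ^ n := by
  set proj : EuclideanSpace ℝ (Fin (n + 1)) → (Fin n → ℝ) := fun p k => p (j.succAbove k)
  have hanti : AntilipschitzWith (4 * n) ((cosLevelBox η b ℓ j).domRestrict proj) :=
    AntilipschitzWith.of_le_mul_dist fun p p' => by
      push_cast
      exact dist_le_of_mem_cosLevelBox hη hℓ p.2 p'.2
  have himage : proj '' cosLevelBox η b ℓ j ⊆ univ.pi fun _ => Icc 0 ℓ := by
    rintro _ ⟨p, hp, rfl⟩ k -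
    exact hp.1 _
  calc μH[n] (cosLevelBox η b ℓ j)
      ≤ ((4 * n : ℝ≥0) : ℝ≥0∞) ^ (n : ℝ) * μH[n] (proj '' cosLevelBox η b ℓ j) :=
        hausdorffMeasure_le_of_antilipschitzWith_domRestrict hanti (Nat.cast_nonneg n)
    _ ≤ (4 * n) ^ n * volume (univ.pi fun _ : Fin n => Icc 0 ℓ) := by
        push_cast
        rw [ENNReal.rpow_natCast]
        have hvol : (μH[n] : Measure (Fin n → ℝ)) = volume := by
          simpa using hausdorffMeasure_pi_real (ι := Fin n)
        rw [hvol]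
        gcongr
    _ = (4 * n) ^ n * ENNReal.ofReal ℓ ^ n := by rw [volume_pi_pi]; simp

end CosLevelBox

/-- `reflect c` maps `[0, π/2]`, `[-π/2, 0]`, `[π/2, π]`, `[-π, -π/2]` respectively onto
`[0, π/2]`, sending the critical points `0, ±π` of `cos` to `0`. -/
def reflect : Fin 4 → ℝ → ℝ := ![fun t => t, fun t => -t, fun t => π - t, fun t => π + t]

def reflectSign : Fin 4 → ℝ := ![1, 1, -1, -1]

theorem abs_reflectSign (c : Fin 4) : |reflectSign c| = 1 := by
  fin_cases c <;> simp [reflectSign]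

theorem cos_eq_reflectSign_mul_cos_reflect (c : Fin 4) (t : ℝ) :
    cos t = reflectSign c * cos (reflect c t) := by
  fin_cases c <;> simp [reflect, reflectSign, cos_pi_sub, cos_add]

theorem abs_sin_reflect (c : Fin 4) (t : ℝ) : |sin (reflect c t)| = |sin t| := by
  fin_cases c <;> simp [reflect, sin_add]

theorem isometry_reflect (c : Fin 4) : Isometry (reflect c) := by
  refine Isometry.of_dist_eq fun s t => ?_
  fin_cases c <;> simp only [reflect, Real.dist_eq] <;> simp [abs_sub_comm t s, neg_add_eq_sub]

theorem reflect_surjective (c : Fin 4) : Function.Surjective (reflect c) := by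
  fin_cases c <;> intro y
  · exact ⟨y, rfl⟩
  · exact ⟨-y, by simp [reflect]⟩
  · exact ⟨π - y, by simp [reflect]⟩
  · exact ⟨y - π, by simp [reflect]⟩

theorem exists_reflect_mem_Icc {t : ℝ} (ht : |t| ≤ π) :
    ∃ c, reflect c t ∈ Icc 0 (π / 2 * |sin t|) := by
  have hfold : ∃ c, reflect c t ∈ Icc 0 (π / 2) := by
    rw [abs_le] at ht
    rcases le_total 0 t with h | h
    · rcases le_total t (π / 2) with h' | h'
      · exact ⟨0, by simp [reflect]; constructor <;> linarith⟩
      · exact ⟨2, by simp [reflect]; constructor <;> linarith⟩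
    · rcases le_total (-(π / 2)) t with h' | h'
      · exact ⟨1, by simp [reflect]; constructor <;> linarith⟩
      · exact ⟨3, by simp [reflect]; constructor <;> linarith⟩
  obtain ⟨c, hc₀, hc⟩ := hfold
  refine ⟨c, hc₀, ?_⟩
  have hπ := pi_pos
  rw [← abs_sin_reflect c, abs_of_nonneg (sin_nonneg_of_nonneg_of_le_pi hc₀ (by linarith))]
  calc reflect c t = π / 2 * (2 / π * reflect c t) := by field_simp
    _ ≤ π / 2 * sin (reflect c t) := by gcongr; exact mul_le_sin hc₀ hc

def reflectCoords {ι : Type*} (w : ι → Fin 4) (p : EuclideanSpace ℝ ι) :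
    EuclideanSpace ℝ ι :=
  WithLp.toLp 2 fun i => reflect (w i) (p i)

theorem isometry_reflectCoords {ι : Type*} [Fintype ι] (w : ι → Fin 4) :
    Isometry (reflectCoords w) := by
  refine Isometry.of_dist_eq fun p q => ?_
  simp only [EuclideanSpace.dist_eq, reflectCoords, (isometry_reflect _).dist_eq]

theorem reflectCoords_surjective {ι : Type*} (w : ι → Fin 4) :
    Function.Surjective (reflectCoords w) := by
  intro y
  choose v hv using fun i => reflect_surjective (w i) (y i)
  exact ⟨WithLp.toLp 2 v, by ext i; exact hv i⟩

theorem sigmaA_inter_subset_iUnion (a s : ℝ) :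
    SigmaA a ∩ {p | ∀ i, |sin (p i)| ≤ s} ⊆
      ⋃ wj : (Fin 3 → Fin 4) × Fin 3,
        reflectCoords wj.1 ⁻¹' cosLevelBox (reflectSign ∘ wj.1) (3 - a) (π / 2 * s) wj.2 := by
  rintro p ⟨⟨hbox, he⟩, hsin⟩
  choose w hw using fun i => exists_reflect_mem_Icc (hbox i)
  obtain ⟨j, -, hj⟩ := Finset.exists_max_image Finset.univ (fun i => reflect (w i) (p i))
    Finset.univ_nonempty
  refine mem_iUnion.2 ⟨(w, j), fun i => ⟨(hw i).1, (hw i).2.trans ?_⟩,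
    fun i => hj i (Finset.mem_univ i), ?_⟩
  · gcongr
    exact hsin i
  · simp only [reflectCoords, Function.comp_apply, ← cos_eq_reflectSign_mul_cos_reflect]
    rw [← he, e3, Finset.sum_sub_distrib]
    simp

/-- `49152 = 192 · 256`: there are `4³ · 3` pieces, each of area at most
`8² (π s / 2)² ≤ 256 s²`. -/
theorem hausdorffMeasure_sigmaA_inter_le (a : ℝ) {s : ℝ} (hs : s ≤ 1) :
    μH[2] (SigmaA a ∩ {p | ∀ i, |sin (p i)| ≤ s}) ≤ 49152 * ENNReal.ofReal s ^ 2 := by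
  have hπ := pi_pos
  have hℓ : π / 2 * s ≤ π / 2 := mul_le_of_le_one_right (by positivity) hs
  have hpiece : ∀ wj : (Fin 3 → Fin 4) × Fin 3,
      μH[2] (reflectCoords wj.1 ⁻¹'
          cosLevelBox (reflectSign ∘ wj.1) (3 - a) (π / 2 * s) wj.2) ≤ 256 * ENNReal.ofReal s ^ 2 := fun wj => by
    rw [(isometry_reflectCoords wj.1).hausdorffMeasure_preimage
      (Or.inr (reflectCoords_surjective _)), (reflectCoords_surjective _).range_eq, inter_univ]
    have h := hausdorffMeasure_cosLevelBox_le (n := 2) (fun i => abs_reflectSign (wj.1 i))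
      (3 - a) hℓ wj.2
    have hℓ' : ENNReal.ofReal (π / 2 * s) ≤ 2 * ENNReal.ofReal s := by
      rw [ENNReal.ofReal_mul (by positivity)]
      gcongr
      rw [← ENNReal.ofReal_ofNat]
      exact ENNReal.ofReal_le_ofReal (by linarith [pi_le_four])
    calc _ ≤ (4 * 2) ^ 2 * ENNReal.ofReal (π / 2 * s) ^ 2 := by exact_mod_cast h
      _ ≤ (4 * 2) ^ 2 * (2 * ENNReal.ofReal s) ^ 2 := by gcongr
      _ = 256 * ENNReal.ofReal s ^ 2 := by ring
  calc _ ≤ ∑ _wj : (Fin 3 → Fin 4) × Fin 3, 256 * ENNReal.ofReal s ^ 2 :=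
        (measure_mono (sigmaA_inter_subset_iUnion a s)).trans
          ((measure_iUnion_fintype_le _ _).trans (Finset.sum_le_sum fun wj _ => hpiece wj))
    _ = 49152 * ENNReal.ofReal s ^ 2 := by
        simp only [Finset.sum_const, Finset.card_univ, Fintype.card_prod, Fintype.card_fun,
          Fintype.card_fin, nsmul_eq_mul]
        norm_num
        ring

theorem abs_sin_le_norm_gradE (p : E3) (i : Fin 3) : |sin (p i)| ≤ ‖gradE p‖ :=
  PiLp.norm_apply_le (gradE p) i

theorem continuous_gradE : Continuous gradE := by
  unfold gradE toE3
  fun_prop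

/-- `sup_a ∫_{Σ_a} |∇e(p)|⁻¹ dm_a(p) ≤ C` for a universal constant `C`, where `dm_a`
is the 2-dimensional Hausdorff measure restricted to `Σ_a`. -/
theorem stmt18 :
    ∃ C : ℝ, 0 < C ∧ ∀ a : ℝ,
      ∫⁻ p in SigmaA a, ENNReal.ofReal (‖gradE p‖⁻¹) ∂μH[2] ≤ ENNReal.ofReal C := by
  refine ⟨5 * 49152, by norm_num, fun a => ?_⟩
  have hmeas : Measurable fun p => ‖gradE p‖ :=
    (continuous_norm.comp continuous_gradE).measurable
  have huniv : μH[2].restrict (SigmaA a) univ ≤ 49152 := by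
    have hsub : SigmaA a ⊆ SigmaA a ∩ {p | ∀ i, |sin (p i)| ≤ 1} :=
      fun p hp => ⟨hp, fun i => abs_sin_le_one _⟩
    rw [Measure.restrict_apply_univ]
    simpa using (measure_mono hsub).trans (hausdorffMeasure_sigmaA_inter_le a le_rfl)
  have hlevel : ∀ s ≤ 1,
      μH[2].restrict (SigmaA a) {p | ‖gradE p‖ ≤ s} ≤ 49152 * ENNReal.ofReal s ^ 2 := by
    intro s hs
    rw [Measure.restrict_apply (measurableSet_le hmeas measurable_const), inter_comm]
    refine (measure_mono (inter_subset_inter_right _ fun p hp i => ?_)).trans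
      (hausdorffMeasure_sigmaA_inter_le a hs)
    exact (abs_sin_le_norm_gradE p i).trans hp
  calc _ ≤ 5 * 49152 := lintegral_ofReal_inv_le hmeas huniv hlevel
    _ = ENNReal.ofReal (5 * 49152) := by norm_num
end
end
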